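/- (Stationarity of the q-Hahn jump kernel) For 0 ≤ q ≤ ν < μ < 1, 0 < d < 1, and every integer M ≥ 0: d^M (ν;q)_M/(q;q)_M = ∑_{k≥0} d^k ∑_{l=0}^{k} (μd)^{M-k+l} ((ν/μ;q)_{M-k+l}/(q;q)_{M-k+l}) ((dμ;q)_∞/(dν;q)_∞) μ^l ((ν/μ;q)_l (μ;q)_{k-l} / ((q;q)_l (q;q)_{k-l})), where terms with negative q-Pochhammer index are interpreted as zero. -/

import Mathlib

/-- The finite q-Pochhammer symbol `(a;q)_n = ∏_{j=0}^{n-1} (1 - a q^j)`. -/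
noncomputable def qPoch (q a : ℝ) (n : ℕ) : ℝ := ∏ j ∈ Finset.range n, (1 - a * q ^ j)

/-- The infinite q-Pochhammer symbol `(a;q)_∞ = ∏_{j≥0} (1 - a q^j)`. -/
noncomputable def qPochInf (q a : ℝ) : ℝ := ∏' j : ℕ, (1 - a * q ^ j)

/-- The weight `(μd)^n (ν/μ;q)_n/(q;q)_n` for `n ≥ 0`, interpreted as zero for
negative index `n` (q-Pochhammer symbols with negative index vanish by convention). -/
noncomputable def wQH (q μ ν d : ℝ) (n : ℤ) : ℝ :=
  if 0 ≤ n then (μ * d) ^ n.toNat * qPoch q (ν / μ) n.toNat / qPoch q q n.toNat else 0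

open Finset Filter Topology

/-- `(a;q)_n / (q;q)_n`. -/
noncomputable def qc (q a : ℝ) (n : ℕ) : ℝ := qPoch q a n / qPoch q q n

/-- The basic hypergeometric series `∑ (a;q)_n/(q;q)_n z^n`. -/
noncomputable def qf (q a z : ℝ) : ℝ := ∑' n : ℕ, qc q a n * z ^ n

section QHahnAux

variable {q a z x : ℝ}

lemma one_sub_mul_pow_pos (hq0 : 0 ≤ q) (hq1 : q < 1) (ha0 : 0 ≤ a) (ha1 : a < 1) (j : ℕ) :
    0 < 1 - a * q ^ j := by
  have h1 : q ^ j ≤ 1 := pow_le_one₀ hq0 hq1.le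
  nlinarith [pow_nonneg hq0 j]

lemma qPoch_pos (hq0 : 0 ≤ q) (hq1 : q < 1) (ha0 : 0 ≤ a) (ha1 : a < 1) (n : ℕ) :
    0 < qPoch q a n :=
  Finset.prod_pos fun j _ => one_sub_mul_pow_pos hq0 hq1 ha0 ha1 j

lemma qPochq_pos (hq0 : 0 ≤ q) (hq1 : q < 1) (n : ℕ) : 0 < qPoch q q n :=
  qPoch_pos hq0 hq1 hq0 hq1 n

lemma qPoch_succ (q x : ℝ) (n : ℕ) : qPoch q x (n + 1) = qPoch q x n * (1 - x * q ^ n) :=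
  Finset.prod_range_succ _ _

lemma qc_zero : qc q a 0 = 1 := by simp [qc, qPoch]

lemma qc_pos (hq0 : 0 ≤ q) (hq1 : q < 1) (ha0 : 0 ≤ a) (ha1 : a < 1) (n : ℕ) :
    0 < qc q a n :=
  div_pos (qPoch_pos hq0 hq1 ha0 ha1 n) (qPochq_pos hq0 hq1 n)

lemma one_sub_pow_succ_pos (hq0 : 0 ≤ q) (hq1 : q < 1) (n : ℕ) : 0 < 1 - q ^ (n + 1) := by
  have := one_sub_mul_pow_pos hq0 hq1 hq0 hq1 n
  rw [pow_succ]; nlinarith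

lemma qc_succ (hq0 : 0 ≤ q) (hq1 : q < 1) (a : ℝ) (n : ℕ) :
    qc q a (n + 1) * (1 - q ^ (n + 1)) = qc q a n * (1 - a * q ^ n) := by
  have hD : qPoch q q n ≠ 0 := (qPochq_pos hq0 hq1 n).ne'
  have h1 : (1 : ℝ) - q * q ^ n ≠ 0 := (one_sub_mul_pow_pos hq0 hq1 hq0 hq1 n).ne'
  rw [qc, qc, qPoch_succ, qPoch_succ, pow_succ]
  rw [div_mul_eq_mul_div, div_mul_eq_mul_div, div_eq_div_iff (mul_ne_zero hD h1) hD]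
  ring


lemma summable_qc_mul_pow (hq0 : 0 ≤ q) (hq1 : q < 1) (ha0 : 0 ≤ a) (ha1 : a < 1)
    (hz0 : 0 ≤ z) (hz1 : z < 1) : Summable fun n : ℕ => qc q a n * z ^ n := by
  rcases eq_or_lt_of_le hz0 with h0 | h0
  · apply summable_of_ne_finset_zero (s := {0})
    intro n hn
    simp only [Finset.mem_singleton] at hn
    simp [← h0, zero_pow hn]
  · have hpos : ∀ n : ℕ, 0 < qc q a n * z ^ n := fun n =>
      mul_pos (qc_pos hq0 hq1 ha0 ha1 n) (pow_pos h0 n)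
    apply summable_of_ratio_test_tendsto_lt_one hz1
      (Filter.Eventually.of_forall fun n => (hpos n).ne')
    have hq : Tendsto (fun n : ℕ => q ^ n) atTop (𝓝 0) :=
      tendsto_pow_atTop_nhds_zero_of_lt_one hq0 hq1
    have h2 : Tendsto (fun n : ℕ => z * (1 - a * q ^ n) / (1 - q * q ^ n)) atTop
        (𝓝 (z * (1 - a * 0) / (1 - q * 0))) := by
      apply Tendsto.div
      · exact tendsto_const_nhds.mul (tendsto_const_nhds.sub (tendsto_const_nhds.mul hq))
      · exact tendsto_const_nhds.sub (tendsto_const_nhds.mul hq)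
      · norm_num
    simp only [mul_zero, sub_zero, div_one, mul_one] at h2
    apply h2.congr
    intro n
    rw [Real.norm_of_nonneg (hpos _).le, Real.norm_of_nonneg (hpos _).le]
    have h1 : (1 : ℝ) - q ^ (n + 1) ≠ 0 := (one_sub_pow_succ_pos hq0 hq1 n).ne'
    have hc : qc q a (n + 1) = qc q a n * (1 - a * q ^ n) / (1 - q ^ (n + 1)) := by
      rw [eq_div_iff h1]; exact qc_succ hq0 hq1 a n
    rw [eq_div_iff (hpos n).ne', hc, pow_succ z n, pow_succ q n]
    have hcn : qc q a n ≠ 0 := (qc_pos hq0 hq1 ha0 ha1 n).ne'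
    have hzn : z ^ n ≠ 0 := (pow_pos h0 n).ne'
    have h1' : (1 : ℝ) - q * q ^ n ≠ 0 := (one_sub_mul_pow_pos hq0 hq1 hq0 hq1 n).ne'
    rw [pow_succ q n] at h1
    field_simp [h1']

lemma qf_step (hq0 : 0 ≤ q) (hq1 : q < 1) (ha0 : 0 ≤ a) (ha1 : a < 1)
    (hz0 : 0 ≤ z) (hz1 : z < 1) :
    (1 - z) * qf q a z = (1 - a * z) * qf q a (q * z) := by
  have hqz0 : 0 ≤ q * z := mul_nonneg hq0 hz0
  have hqz1 : q * z < 1 := lt_of_le_of_lt (mul_le_of_le_one_left hz0 hq1.le) hz1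
  have S1 := summable_qc_mul_pow hq0 hq1 ha0 ha1 hz0 hz1
  have S2 := summable_qc_mul_pow hq0 hq1 ha0 ha1 hqz0 hqz1
  set g : ℕ → ℝ := fun n => qc q a n * (1 - q ^ n) * z ^ n with hg
  have hgs : ∀ n : ℕ, qc q a n * z ^ n - qc q a n * (q * z) ^ n = g n := by
    intro n; simp only [hg]; rw [mul_pow]; ring
  have Sg : Summable g := (S1.sub S2).congr hgs
  have h1 : qf q a z - qf q a (q * z) = ∑' n, g n := by
    rw [qf, qf, ← S1.tsum_sub S2]; exact tsum_congr hgs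
  have h2 : ∑' n, g n = ∑' n, g (n + 1) := by
    rw [Sg.tsum_eq_zero_add]; simp [hg]
  have h3 : ∀ n : ℕ, g (n + 1) = z * (qc q a n * z ^ n) - (a * z) * (qc q a n * (q * z) ^ n) := by
    intro n
    have hc := qc_succ hq0 hq1 a n
    simp only [hg]
    linear_combination z ^ (n + 1) * hc
  have h4 : ∑' n, g (n + 1) = z * qf q a z - (a * z) * qf q a (q * z) := by
    rw [tsum_congr h3, Summable.tsum_sub (S1.mul_left z) (S2.mul_left (a * z)),
      tsum_mul_left, tsum_mul_left, qf, qf]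
  linear_combination h1.trans (h2.trans h4)

lemma qf_iter (hq0 : 0 ≤ q) (hq1 : q < 1) (ha0 : 0 ≤ a) (ha1 : a < 1)
    (hz0 : 0 ≤ z) (hz1 : z < 1) (N : ℕ) :
    qPoch q z N * qf q a z = qPoch q (a * z) N * qf q a (q ^ N * z) := by
  induction N with
  | zero => simp [qPoch]
  | succ n ih =>
    have hw0 : 0 ≤ q ^ n * z := mul_nonneg (pow_nonneg hq0 n) hz0
    have hw1 : q ^ n * z < 1 :=
      lt_of_le_of_lt (mul_le_of_le_one_left hz0 (pow_le_one₀ hq0 hq1.le)) hz1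
    have hstep := qf_step hq0 hq1 ha0 ha1 hw0 hw1
    rw [qPoch_succ, qPoch_succ]
    have hq' : q ^ (n + 1) * z = q * (q ^ n * z) := by ring
    rw [hq']
    calc qPoch q z n * (1 - z * q ^ n) * qf q a z
        = (1 - q ^ n * z) * (qPoch q z n * qf q a z) := by ring
      _ = (1 - q ^ n * z) * (qPoch q (a * z) n * qf q a (q ^ n * z)) := by rw [ih]
      _ = qPoch q (a * z) n * ((1 - q ^ n * z) * qf q a (q ^ n * z)) := by ring
      _ = qPoch q (a * z) n * ((1 - a * (q ^ n * z)) * qf q a (q * (q ^ n * z))) := by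
          rw [hstep]
      _ = qPoch q (a * z) n * (1 - a * z * q ^ n) * qf q a (q * (q ^ n * z)) := by ring

lemma qf_tendsto_one (hq0 : 0 ≤ q) (hq1 : q < 1) (ha0 : 0 ≤ a) (ha1 : a < 1)
    (hz0 : 0 ≤ z) (hz1 : z < 1) :
    Tendsto (fun N : ℕ => qf q a (q ^ N * z)) atTop (𝓝 1) := by
  have S1 := summable_qc_mul_pow hq0 hq1 ha0 ha1 hz0 hz1
  have S1' : Summable fun n : ℕ => qc q a (n + 1) * z ^ (n + 1) :=
    (summable_nat_add_iff (f := fun n : ℕ => qc q a n * z ^ n) 1).mpr S1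
  set K := ∑' n : ℕ, qc q a (n + 1) * z ^ (n + 1) with hK
  have hterm : ∀ n : ℕ, 0 ≤ qc q a (n + 1) * z ^ (n + 1) := fun n =>
    mul_nonneg (qc_pos hq0 hq1 ha0 ha1 _).le (pow_nonneg hz0 _)
  have upper : ∀ N : ℕ, qf q a (q ^ N * z) ≤ 1 + q ^ N * K := by
    intro N
    have hw0 : 0 ≤ q ^ N * z := mul_nonneg (pow_nonneg hq0 N) hz0
    have hw1 : q ^ N * z < 1 :=
      lt_of_le_of_lt (mul_le_of_le_one_left hz0 (pow_le_one₀ hq0 hq1.le)) hz1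
    have Sw := summable_qc_mul_pow hq0 hq1 ha0 ha1 hw0 hw1
    have Sw' : Summable fun n : ℕ => qc q a (n + 1) * (q ^ N * z) ^ (n + 1) :=
      (summable_nat_add_iff (f := fun n : ℕ => qc q a n * (q ^ N * z) ^ n) 1).mpr Sw
    rw [qf, Sw.tsum_eq_zero_add, qc_zero, pow_zero, mul_one]
    apply add_le_add_right
    rw [hK, ← tsum_mul_left]
    apply Summable.tsum_le_tsum _ Sw' (S1'.mul_left (q ^ N))
    intro n
    have h5 : (q ^ N * z) ^ (n + 1) = q ^ (N * (n + 1)) * z ^ (n + 1) := by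
      rw [mul_pow, ← pow_mul]
    rw [h5]
    have h6 : q ^ (N * (n + 1)) ≤ q ^ N :=
      pow_le_pow_of_le_one hq0 hq1.le (Nat.le_mul_of_pos_right N (Nat.succ_pos n))
    have h7 : 0 ≤ qc q a (n + 1) * z ^ (n + 1) := hterm n
    calc qc q a (n + 1) * (q ^ (N * (n + 1)) * z ^ (n + 1))
        = q ^ (N * (n + 1)) * (qc q a (n + 1) * z ^ (n + 1)) := by ring
      _ ≤ q ^ N * (qc q a (n + 1) * z ^ (n + 1)) := mul_le_mul_of_nonneg_right h6 h7
  have lower : ∀ N : ℕ, (1 : ℝ) ≤ qf q a (q ^ N * z) := by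
    intro N
    have hw0 : 0 ≤ q ^ N * z := mul_nonneg (pow_nonneg hq0 N) hz0
    have hw1 : q ^ N * z < 1 :=
      lt_of_le_of_lt (mul_le_of_le_one_left hz0 (pow_le_one₀ hq0 hq1.le)) hz1
    have Sw := summable_qc_mul_pow hq0 hq1 ha0 ha1 hw0 hw1
    have := Sw.le_tsum 0 (fun n _ =>
      mul_nonneg (qc_pos hq0 hq1 ha0 ha1 n).le (pow_nonneg hw0 n))
    simpa [qc_zero, qf] using this
  have l1 : Tendsto (fun N : ℕ => 1 + q ^ N * K) atTop (𝓝 1) := by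
    have h := Tendsto.add (tendsto_const_nhds (x := (1:ℝ)))
      ((tendsto_pow_atTop_nhds_zero_of_lt_one hq0 hq1).mul_const K)
    simpa using h
  exact tendsto_of_tendsto_of_tendsto_of_le_of_le tendsto_const_nhds l1 lower upper

lemma summable_log_qp (hq0 : 0 ≤ q) (hq1 : q < 1) (hx0 : 0 ≤ x) (hx1 : x < 1) :
    Summable fun j : ℕ => Real.log (1 - x * q ^ j) := by
  rw [← summable_neg_iff]
  refine Summable.of_nonneg_of_le (fun j => ?_) (fun j => ?_)
    ((summable_geometric_of_lt_one hq0 hq1).mul_left (x / (1 - x)))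
  · have h1 : 1 - x * q ^ j ≤ 1 := by nlinarith [pow_nonneg hq0 j, pow_le_one₀ hq0 hq1.le (n := j)]
    have h2 : 0 < 1 - x * q ^ j := one_sub_mul_pow_pos hq0 hq1 hx0 hx1 j
    simpa using Real.log_nonpos h2.le h1
  · have h2 : 0 < 1 - x * q ^ j := one_sub_mul_pow_pos hq0 hq1 hx0 hx1 j
    have h3 := Real.log_le_sub_one_of_pos (inv_pos.2 h2)
    rw [Real.log_inv] at h3
    have hx2 : 0 < 1 - x := by linarith
    have h4 : x * q ^ j ≤ x := by nlinarith [pow_nonneg hq0 j, pow_le_one₀ hq0 hq1.le (n := j)]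
    have h5 : (1 - x * q ^ j)⁻¹ - 1 = x * q ^ j / (1 - x * q ^ j) := by field_simp; ring
    have h6 : x * q ^ j / (1 - x * q ^ j) ≤ x * q ^ j / (1 - x) := by
      gcongr
    calc -Real.log (1 - x * q ^ j) ≤ (1 - x * q ^ j)⁻¹ - 1 := by linarith
      _ = x * q ^ j / (1 - x * q ^ j) := h5
      _ ≤ x * q ^ j / (1 - x) := h6
      _ = x / (1 - x) * q ^ j := by ring

lemma multipliable_qp (hq0 : 0 ≤ q) (hq1 : q < 1) (hx0 : 0 ≤ x) (hx1 : x < 1) :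
    Multipliable fun j : ℕ => 1 - x * q ^ j :=
  Real.multipliable_of_summable_log (fun j => one_sub_mul_pow_pos hq0 hq1 hx0 hx1 j)
    (summable_log_qp hq0 hq1 hx0 hx1)

lemma tendsto_qPoch (hq0 : 0 ≤ q) (hq1 : q < 1) (hx0 : 0 ≤ x) (hx1 : x < 1) :
    Tendsto (fun N : ℕ => qPoch q x N) atTop (𝓝 (qPochInf q x)) :=
  (multipliable_qp hq0 hq1 hx0 hx1).hasProd.tendsto_prod_nat

lemma qPochInf_pos (hq0 : 0 ≤ q) (hq1 : q < 1) (hx0 : 0 ≤ x) (hx1 : x < 1) :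
    0 < qPochInf q x := by
  have h2 := Real.rexp_tsum_eq_tprod (f := fun j => 1 - x * q ^ j)
    (fun j => one_sub_mul_pow_pos hq0 hq1 hx0 hx1 j)
    (summable_log_qp hq0 hq1 hx0 hx1)
  rw [qPochInf, ← h2]
  exact Real.exp_pos _

lemma qPochInf_mul_qf (hq0 : 0 ≤ q) (hq1 : q < 1) (ha0 : 0 ≤ a) (ha1 : a < 1)
    (hz0 : 0 ≤ z) (hz1 : z < 1) :
    qPochInf q z * qf q a z = qPochInf q (a * z) := by
  have haz0 : 0 ≤ a * z := mul_nonneg ha0 hz0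
  have haz1 : a * z < 1 := lt_of_le_of_lt (mul_le_of_le_one_left hz0 ha1.le) hz1
  have T1 : Tendsto (fun N : ℕ => qPoch q z N * qf q a z) atTop
      (𝓝 (qPochInf q z * qf q a z)) := (tendsto_qPoch hq0 hq1 hz0 hz1).mul_const _
  have T2 : Tendsto (fun N : ℕ => qPoch q (a * z) N * qf q a (q ^ N * z)) atTop
      (𝓝 (qPochInf q (a * z) * 1)) :=
    (tendsto_qPoch hq0 hq1 haz0 haz1).mul (qf_tendsto_one hq0 hq1 ha0 ha1 hz0 hz1)
  have heq : (fun N : ℕ => qPoch q z N * qf q a z)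
      = fun N : ℕ => qPoch q (a * z) N * qf q a (q ^ N * z) :=
    funext (qf_iter hq0 hq1 ha0 ha1 hz0 hz1)
  rw [heq] at T1
  simpa using tendsto_nhds_unique T1 T2

lemma qVandermonde (hq0 : 0 ≤ q) (hq1 : q < 1) (a b : ℝ) (M : ℕ) :
    ∑ n ∈ Finset.range (M + 1), qc q a n * b ^ n * qc q b (M - n) = qc q (a * b) M := by
  induction M with
  | zero => simp [qc_zero]
  | succ M ih =>
    have hne : (1 : ℝ) - q ^ (M + 1) ≠ 0 := (one_sub_pow_succ_pos hq0 hq1 M).ne'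
    have key : (∑ n ∈ Finset.range (M + 2), qc q a n * b ^ n * qc q b (M + 1 - n))
        * (1 - q ^ (M + 1))
        = (∑ n ∈ Finset.range (M + 1), qc q a n * b ^ n * qc q b (M - n))
          * (1 - a * b * q ^ M) := by
      rw [Finset.sum_mul, Finset.sum_mul]
      have split : ∀ n ∈ Finset.range (M + 2),
          qc q a n * b ^ n * qc q b (M + 1 - n) * (1 - q ^ (M + 1))
          = (qc q a n * b ^ n * (qc q b (M + 1 - n) * (1 - q ^ (M + 1 - n))))
            + (qc q a n * (1 - q ^ n) * b ^ n * (qc q b (M + 1 - n) * q ^ (M + 1 - n))) := by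
        intro n hn
        have hn' : n ≤ M + 1 := Nat.lt_succ_iff.mp (Finset.mem_range.mp hn)
        have hp : q ^ (M + 1 - n) * q ^ n = q ^ (M + 1) := by
          rw [← pow_add]; congr 1; omega
        linear_combination (qc q a n * b ^ n * qc q b (M + 1 - n)) * hp
      rw [Finset.sum_congr rfl split, Finset.sum_add_distrib]
      -- first sum: last term vanishes
      have e1 : ∑ n ∈ Finset.range (M + 2),
          qc q a n * b ^ n * (qc q b (M + 1 - n) * (1 - q ^ (M + 1 - n)))
          = ∑ n ∈ Finset.range (M + 1),
            qc q a n * b ^ n * (qc q b (M - n) * (1 - b * q ^ (M - n))) := by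
        rw [Finset.sum_range_succ]
        simp only [Nat.sub_self, pow_zero, sub_self, mul_zero, add_zero]
        apply Finset.sum_congr rfl
        intro n hn
        have hn' : n ≤ M := Nat.lt_succ_iff.mp (Finset.mem_range.mp hn)
        have h2 : M + 1 - n = (M - n) + 1 := by omega
        rw [h2, qc_succ hq0 hq1 b (M - n)]
      -- second sum: first term vanishes, shift index
      have e2 : ∑ n ∈ Finset.range (M + 2),
          qc q a n * (1 - q ^ n) * b ^ n * (qc q b (M + 1 - n) * q ^ (M + 1 - n))
          = ∑ n ∈ Finset.range (M + 1),
            qc q a n * (1 - a * q ^ n) * b ^ (n + 1) * (qc q b (M - n) * q ^ (M - n)) := by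
        rw [Finset.sum_range_succ']
        simp only [pow_zero, sub_self, mul_zero, zero_mul, mul_one, add_zero]
        apply Finset.sum_congr rfl
        intro n hn
        have hn' : n ≤ M := Nat.lt_succ_iff.mp (Finset.mem_range.mp hn)
        have h2 : M + 1 - (n + 1) = M - n := by omega
        rw [h2, qc_succ hq0 hq1 a n]
      rw [e1, e2, ← Finset.sum_add_distrib]
      apply Finset.sum_congr rfl
      intro n hn
      have hn' : n ≤ M := Nat.lt_succ_iff.mp (Finset.mem_range.mp hn)
      have hp : q ^ (M - n) * q ^ n = q ^ M := by rw [← pow_add]; congr 1; omega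
      linear_combination (-(a * qc q a n * b ^ (n + 1) * qc q b (M - n))) * hp
    have hrec := qc_succ hq0 hq1 (a * b) M
    rw [ih] at key
    apply mul_right_cancel₀ hne
    rw [key, hrec]

end QHahnAux

/-- Stationarity of the q-Hahn jump kernel: for `0 ≤ q ≤ ν < μ < 1`, `0 < d < 1` and
every integer `M ≥ 0`,
`d^M (ν;q)_M/(q;q)_M = ∑_{k≥0} d^k ∑_{l=0}^{k} (μd)^{M-k+l} ((ν/μ;q)_{M-k+l}/(q;q)_{M-k+l})
((dμ;q)_∞/(dν;q)_∞) μ^l ((ν/μ;q)_l (μ;q)_{k-l}/((q;q)_l (q;q)_{k-l}))`,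
where terms with negative q-Pochhammer index are interpreted as zero. -/
theorem qHahn_stationarity (q μ ν d : ℝ) (hq0 : 0 ≤ q) (hqν : q ≤ ν) (hνμ : ν < μ)
    (hμ : μ < 1) (hd0 : 0 < d) (hd1 : d < 1) (M : ℕ) :
    d ^ M * qPoch q ν M / qPoch q q M
      = ∑' k : ℕ, d ^ k *
          ∑ l ∈ Finset.range (k + 1),
            wQH q μ ν d ((M : ℤ) - k + l) *
              (qPochInf q (d * μ) / qPochInf q (d * ν)) *
              (μ ^ l * (qPoch q (ν / μ) l * qPoch q μ (k - l) /
                (qPoch q q l * qPoch q q (k - l)))) := by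
  have hν0 : 0 ≤ ν := le_trans hq0 hqν
  have hμ0 : 0 < μ := lt_of_le_of_lt hν0 hνμ
  have hq1 : q < 1 := lt_of_le_of_lt hqν (hνμ.trans hμ)
  have ha0 : 0 ≤ ν / μ := div_nonneg hν0 hμ0.le
  have ha1 : ν / μ < 1 := (div_lt_one hμ0).2 hνμ
  have haμ : ν / μ * μ = ν := div_mul_cancel₀ ν hμ0.ne'
  have hz0 : 0 ≤ d * μ := mul_nonneg hd0.le hμ0.le
  have hz1 : d * μ < 1 := by nlinarith
  have hdν0 : 0 ≤ d * ν := mul_nonneg hd0.le hν0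
  have hdν1 : d * ν < 1 := by nlinarith
  have SA : Summable fun l : ℕ => qc q (ν / μ) l * (d * μ) ^ l :=
    summable_qc_mul_pow hq0 hq1 ha0 ha1 hz0 hz1
  set C := qPochInf q (d * μ) / qPochInf q (d * ν) with hC
  set A : ℕ → ℝ := fun l => qc q (ν / μ) l * (d * μ) ^ l with hA
  set B : ℕ → ℝ := fun j =>
    C * (d ^ j * wQH q μ ν d ((M : ℤ) - j) * (qPoch q μ j / qPoch q q j)) with hB
  have hBzero : ∀ j ∉ Finset.range (M + 1), B j = 0 := by
    intro j hj
    rw [Finset.mem_range, not_lt] at hj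
    have hneg : ¬ (0 ≤ (M : ℤ) - j) := by omega
    simp only [hB]
    rw [wQH, if_neg hneg]
    ring
  have SB : Summable B := summable_of_ne_finset_zero hBzero
  have SAn : Summable fun l : ℕ => ‖A l‖ := by
    simpa [Real.norm_eq_abs] using SA.abs
  have SBn : Summable fun j : ℕ => ‖B j‖ := by
    apply summable_of_ne_finset_zero (s := Finset.range (M + 1))
    intro j hj
    simp [hBzero j hj]
  -- rewrite each summand as an antidiagonal sum
  have hterm : ∀ k : ℕ, d ^ k *
      ∑ l ∈ Finset.range (k + 1),
        wQH q μ ν d ((M : ℤ) - k + l) *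
          (qPochInf q (d * μ) / qPochInf q (d * ν)) *
          (μ ^ l * (qPoch q (ν / μ) l * qPoch q μ (k - l) /
            (qPoch q q l * qPoch q q (k - l))))
      = ∑ p ∈ Finset.HasAntidiagonal.antidiagonal k, A p.1 * B p.2 := by
    intro k
    rw [Finset.Nat.sum_antidiagonal_eq_sum_range_succ_mk, Finset.mul_sum]
    apply Finset.sum_congr rfl
    intro l hl
    have hlk : l ≤ k := Nat.lt_succ_iff.mp (Finset.mem_range.mp hl)
    have h1 : (M : ℤ) - k + l = (M : ℤ) - (k - l : ℕ) := by
      rw [Nat.cast_sub hlk]; ring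
    have h2 : d ^ k = d ^ l * d ^ (k - l) := by
      rw [← pow_add]; congr 1; omega
    rw [h1, h2]
    simp only [hA, hB, hC, qc]
    ring
  rw [tsum_congr hterm,
    ← tsum_mul_tsum_eq_tsum_sum_antidiagonal_of_summable_norm SAn SBn]
  -- compute the B-sum
  have hBsum : ∑' j, B j
      = C * d ^ M * ∑ n ∈ Finset.range (M + 1), qc q (ν / μ) n * μ ^ n * qc q μ (M - n) := by
    rw [tsum_eq_sum hBzero,
      ← Finset.sum_range_reflect (fun n => qc q (ν / μ) n * μ ^ n * qc q μ (M - n)) (M + 1),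
      Finset.mul_sum]
    apply Finset.sum_congr rfl
    intro j hj
    have hjM : j ≤ M := Nat.lt_succ_iff.mp (Finset.mem_range.mp hj)
    have h5 : M + 1 - 1 - j = M - j := by omega
    have h6 : (0 : ℤ) ≤ (M : ℤ) - j := by omega
    have h7 : ((M : ℤ) - j).toNat = M - j := by omega
    have h8 : M - (M - j) = j := Nat.sub_sub_self hjM
    rw [h5, h8]
    simp only [hB, wQH, if_pos h6, h7, qc]
    have hpow : d ^ j * d ^ (M - j) = d ^ M := by rw [← pow_add]; congr 1; omega
    rw [mul_pow]
    linear_combination (C * μ ^ (M - j) * qPoch q (ν / μ) (M - j) / qPoch q q (M - j)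
      * (qPoch q μ j / qPoch q q j)) * hpow
  rw [hBsum, qVandermonde hq0 hq1 (ν / μ) μ M, haμ]
  -- the A-sum is qf
  have hAsum : (∑' l, A l) = qf q (ν / μ) (d * μ) := rfl
  rw [hAsum]
  -- key cancellation
  have hE := qPochInf_mul_qf hq0 hq1 ha0 ha1 hz0 hz1
  have haz : ν / μ * (d * μ) = d * ν := by field_simp
  rw [haz] at hE
  have p1 := qPochInf_pos hq0 hq1 hz0 hz1
  have p2 := qPochInf_pos hq0 hq1 hdν0 hdν1
  have hqf : qf q (ν / μ) (d * μ) ≠ 0 := by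
    intro h
    rw [h, mul_zero] at hE
    exact p2.ne hE
  have h9 : qf q (ν / μ) (d * μ) * C = 1 := by
    rw [hC, ← hE, mul_div_assoc', mul_comm (qPochInf q (d * μ)) (qf q (ν / μ) (d * μ))]
    exact div_self (mul_ne_zero hqf p1.ne')
  calc d ^ M * qPoch q ν M / qPoch q q M
      = (qf q (ν / μ) (d * μ) * C) * (d ^ M * qc q ν M) := by rw [h9, qc]; ring
    _ = qf q (ν / μ) (d * μ) * (C * d ^ M * qc q ν M) := by ring
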